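/- For the Rician Shadowed distribution with parameters m > 0, Rician factor K_r ≥ 0, and mean γ̄ > 0, the generalized MGF of integer order n satisfies, for s ≤ 0: M^{(n)}(s) = (m/(m+K_r))^m · (1+K_r) Γ(n+1) γ̄^n / (1+K_r - γ̄ s)^{n+1} · ₂F₁(m, n+1; 1; (1+K_r)K_r / ((m+K_r)(1+K_r - γ̄ s))). -/

import Mathlib

/-!
Shifting the exponential turns the integral into `C ∫₀^∞ xⁿ e^{-l x} ₁F₁(m; 1; c x) dx` with
`l = (1 + K_r)/γ̄ - s` and `c = K_r (1 + K_r)/(γ̄ (m + K_r))`. Expanding `₁F₁` and integrating term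
by term (all terms are nonnegative), the `k`-th term is a Gamma integral whose value
`(n + k)! / l^{n+k+1} = n! (n + 1)_k / l^{n+k+1}` produces exactly the `k`-th term of
`₂F₁(m, n + 1; 1; c / l)`. The exchange of sum and integral is justified by the convergence of
this `₂F₁` series at `c / l`, and `0 ≤ c / l ≤ K_r / (m + K_r) < 1` for `s ≤ 0`.
-/

open Real MeasureTheory Set

noncomputable def poch (a : ℝ) (n : ℕ) : ℝ := (ascPochhammer ℝ n).eval a

/-- Confluent hypergeometric function of the first kind (series). -/
noncomputable def hyp1F1 (a c z : ℝ) : ℝ :=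
  ∑' k : ℕ, poch a k / (poch c k * (k.factorial : ℝ)) * z ^ k

/-- Gauss hypergeometric series. -/
noncomputable def hyp2F1 (a b c z : ℝ) : ℝ :=
  ∑' k : ℕ, poch a k * poch b k / (poch c k * (k.factorial : ℝ)) * z ^ k

theorem poch_succ (a : ℝ) (k : ℕ) : poch a (k + 1) = poch a k * (a + k) := by
  simp [poch, ascPochhammer_succ_right]

theorem poch_pos {a : ℝ} (ha : 0 < a) (k : ℕ) : 0 < poch a k := by
  induction k with
  | zero => simp [poch]
  | succ k ih => rw [poch_succ]; positivity

theorem factorial_add_eq_factorial_mul_poch (n k : ℕ) :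
    ((n + k).factorial : ℝ) = n.factorial * poch (n + 1) k := by
  induction k with
  | zero => simp [poch]
  | succ k ih =>
    rw [← add_assoc, Nat.factorial_succ, poch_succ]
    push_cast [ih]
    ring

theorem summable_hyp2F1_series {a b c z : ℝ}
    (habc : ∀ k : ℕ, (k : ℝ) ≠ -a ∧ (k : ℝ) ≠ -b ∧ (k : ℝ) ≠ -c) (hz : |z| < 1) :
    Summable fun k : ℕ => poch a k * poch b k / (poch c k * (k.factorial : ℝ)) * z ^ k := by
  have hz' : z ∈ Metric.eball (0 : ℝ) (ordinaryHypergeometricSeries ℝ a b c).radius := by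
    rw [ordinaryHypergeometricSeries_radius_eq_one _ _ _ _ habc, ← ENNReal.coe_one,
      Metric.eball_coe]
    simpa using hz
  refine (FormalMultilinearSeries.summable_norm_apply _ hz').of_norm.congr fun k => ?_
  rw [ordinaryHypergeometricSeries_apply_eq, smul_eq_mul, poch, poch, poch]
  field_simp

theorem integral_pow_mul_exp_neg_mul (p : ℕ) {l : ℝ} (hl : 0 < l) :
    ∫ x in Ioi (0 : ℝ), x ^ p * exp (-(l * x)) = p.factorial / l ^ (p + 1) := by
  have h := integral_rpow_mul_exp_neg_mul_Ioi (a := (p : ℝ) + 1) (by positivity) hl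
  simp only [add_sub_cancel_right, rpow_natCast] at h
  rw [h, Gamma_nat_eq_factorial, ← Nat.cast_succ, rpow_natCast, one_div, inv_pow]
  field_simp

theorem integrableOn_pow_mul_exp_neg_mul (p : ℕ) {l : ℝ} (hl : 0 < l) :
    IntegrableOn (fun x : ℝ => x ^ p * exp (-(l * x))) (Ioi 0) := by
  have hp : (-1 : ℝ) < p := by linarith [p.cast_nonneg (α := ℝ)]
  simpa [rpow_natCast] using integrableOn_rpow_mul_exp_neg_mul_rpow (p := 1) hp one_pos hl

theorem integral_pow_add_mul_exp_neg_mul (n k : ℕ) {l : ℝ} (hl : 0 < l) :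
    ∫ x in Ioi (0 : ℝ), x ^ (n + k) * exp (-(l * x))
      = n.factorial / l ^ (n + 1) * (poch (n + 1) k / l ^ k) := by
  rw [integral_pow_mul_exp_neg_mul _ hl, factorial_add_eq_factorial_mul_poch]
  field_simp
  ring

theorem integral_pow_mul_exp_neg_mul_hyp1F1 (n : ℕ) {a b c l : ℝ} (ha : 0 < a) (hb : 0 < b)
    (hc : 0 ≤ c) (hcl : c < l) :
    ∫ x in Ioi (0 : ℝ), x ^ n * exp (-(l * x)) * hyp1F1 a b (c * x)
      = n.factorial / l ^ (n + 1) * hyp2F1 a (n + 1) b (c / l) := by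
  have hl : 0 < l := hc.trans_lt hcl
  set g : ℕ → ℝ → ℝ := fun k x =>
    poch a k / (poch b k * k.factorial) * c ^ k * (x ^ (n + k) * exp (-(l * x))) with hg
  have hg_nonneg : ∀ k, ∀ x ∈ Ioi (0 : ℝ), 0 ≤ g k x := fun k x (hx : 0 < x) => by
    have := poch_pos ha k
    have := poch_pos hb k
    positivity
  have hg_int : ∀ k, Integrable (g k) (volume.restrict (Ioi 0)) := fun k =>
    (integrableOn_pow_mul_exp_neg_mul (n + k) hl).const_mul _
  have hg_integral : ∀ k, ∫ x in Ioi (0 : ℝ), g k x = n.factorial / l ^ (n + 1) *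
      (poch a k * poch (n + 1) k / (poch b k * k.factorial) * (c / l) ^ k) := fun k => by
    rw [integral_const_mul, integral_pow_add_mul_exp_neg_mul n k hl, div_pow]
    ring
  have hsum : Summable fun k => ∫ x in Ioi (0 : ℝ), ‖g k x‖ := by
    have habs : |c / l| < 1 := by
      rw [abs_of_nonneg (by positivity), div_lt_one hl]
      exact hcl
    have hparams : ∀ k : ℕ, (k : ℝ) ≠ -a ∧ (k : ℝ) ≠ -(n + 1) ∧ (k : ℝ) ≠ -b := fun k => by
      refine ⟨?_, ?_, ?_⟩ <;> linarith [k.cast_nonneg (α := ℝ), n.cast_nonneg (α := ℝ)]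
    refine ((summable_hyp2F1_series hparams habs).mul_left (n.factorial / l ^ (n + 1))).congr
      fun k => ?_
    rw [← hg_integral]
    exact setIntegral_congr_fun measurableSet_Ioi fun x hx =>
      (norm_of_nonneg (hg_nonneg k x hx)).symm
  have hexpand :
      (fun x => x ^ n * exp (-(l * x)) * hyp1F1 a b (c * x)) = fun x => ∑' k, g k x := by
    funext x
    rw [hyp1F1, ← tsum_mul_left]
    refine tsum_congr fun k => ?_
    simp only [hg, mul_pow, pow_add]
    ring
  rw [hexpand, ← integral_tsum_of_summable_integral_norm hg_int hsum, tsum_congr hg_integral,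
    tsum_mul_left, hyp2F1]

/-- Generalized MGF of the Rician Shadowed distribution. -/
theorem stmt_10 (m Kr γbar : ℝ) (n : ℕ) (s : ℝ)
    (hm : 0 < m) (hK : 0 ≤ Kr) (hγ : 0 < γbar) (hs : s ≤ 0) :
    (∫ x in Ioi (0:ℝ),
        x ^ n * Real.exp (s * x) *
          ((m / (m + Kr)) ^ m * ((1 + Kr) / γbar) * Real.exp (-(1 + Kr) * x / γbar) *
            hyp1F1 m 1 (Kr * (1 + Kr) * x / (γbar * (m + Kr)))))
      = (m / (m + Kr)) ^ m * (1 + Kr) * Real.Gamma ((n : ℝ) + 1) * γbar ^ n /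
          (1 + Kr - γbar * s) ^ (n + 1) *
          hyp2F1 m ((n : ℝ) + 1) 1
            ((1 + Kr) * Kr / ((m + Kr) * (1 + Kr - γbar * s))) := by
  have hmK : 0 < m + Kr := by linarith
  obtain ⟨l, hl⟩ : ∃ l, l = (1 + Kr) / γbar - s := ⟨_, rfl⟩
  obtain ⟨c, hc⟩ : ∃ c, c = Kr * (1 + Kr) / (γbar * (m + Kr)) := ⟨_, rfl⟩
  have hc_nonneg : 0 ≤ c := by rw [hc]; positivity
  have hcl : c < l := calc
    c = (1 + Kr) / γbar * (Kr / (m + Kr)) := by rw [hc]; field_simp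
    _ < (1 + Kr) / γbar :=
      mul_lt_of_lt_one_right (by positivity) ((div_lt_one hmK).2 (by linarith))
    _ ≤ l := by linarith
  have hden : 1 + Kr - γbar * s = γbar * l := by rw [hl]; field_simp
  have hintegrand : ∀ x : ℝ,
      x ^ n * exp (s * x) * ((m / (m + Kr)) ^ m * ((1 + Kr) / γbar) *
        exp (-(1 + Kr) * x / γbar) * hyp1F1 m 1 (Kr * (1 + Kr) * x / (γbar * (m + Kr))))
      = (m / (m + Kr)) ^ m * ((1 + Kr) / γbar) *
        (x ^ n * exp (-(l * x)) * hyp1F1 m 1 (c * x)) := by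
    intro x
    rw [show -(l * x) = s * x + -(1 + Kr) * x / γbar by rw [hl]; ring, exp_add, hc]
    ring_nf
  simp_rw [hintegrand]
  rw [integral_const_mul, integral_pow_mul_exp_neg_mul_hyp1F1 n hm one_pos hc_nonneg hcl,
    Gamma_nat_eq_factorial, hden, show c / l = (1 + Kr) * Kr / ((m + Kr) * (γbar * l)) by
      rw [hc]; field_simp]
  have hl_pos : 0 < l := hc_nonneg.trans_lt hcl
  field_simp
  ring
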